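/- arXiv:2605.26687 — 4 statements merged into one kernel-verified Lean document; each statement's English description precedes it below -/
import Mathlib

section
/- Let p_M be the unique p > 0 with √3·((p − 2)/√(2 + 4p) + (p − 1)/√(10 + 40p)) = 100, and set ρ_{M−} := (2 + 4p_M)/(p_M + 8) and ρ_{M+} := (10 + 40p_M)/(p_M + 4). Then 3.99 < ρ_{M−} < 4 and 39.9 < ρ_{M+} < 40. -/
/-- Let `p_M` be the unique `p > 0` with
`√3·((p − 2)/√(2 + 4p) + (p − 1)/√(10 + 40p)) = 100`, and set
`ρ_{M−} := (2 + 4·p_M)/(p_M + 8)` and `ρ_{M+} := (10 + 40·p_M)/(p_M + 4)`.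
Then `3.99 < ρ_{M−} < 4` and `39.9 < ρ_{M+} < 40`. -/
theorem rhoM_bounds (pM ρMm ρMp : ℝ) (hpM : 0 < pM)
    (heq : Real.sqrt 3 * ((pM - 2) / Real.sqrt (2 + 4 * pM)
        + (pM - 1) / Real.sqrt (10 + 40 * pM)) = 100)
    (hρMm : ρMm = (2 + 4 * pM) / (pM + 8))
    (hρMp : ρMp = (10 + 40 * pM) / (pM + 4)) :
    (3.99 < ρMm ∧ ρMm < 4) ∧ (39.9 < ρMp ∧ ρMp < 40) := by
  have hbig : 2992 < pM := by
    by_contra hle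
    push_neg at hle
    set a := Real.sqrt pM with ha
    have ha0 : 0 < a := Real.sqrt_pos.mpr hpM
    have ha2 : a ^ 2 = pM := Real.sq_sqrt hpM.le
    have haub : a ≤ 547 / 10 := by
      have h1 : Real.sqrt pM ≤ Real.sqrt ((547 / 10) ^ 2) :=
        Real.sqrt_le_sqrt (by norm_num; linarith)
      rwa [Real.sqrt_sq (by norm_num : (0:ℝ) ≤ 547 / 10)] at h1
    have hs1 : 2 * a ≤ Real.sqrt (2 + 4 * pM) := by
      have h1 : Real.sqrt (4 * pM) ≤ Real.sqrt (2 + 4 * pM) :=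
        Real.sqrt_le_sqrt (by linarith)
      calc 2 * a = Real.sqrt 4 * Real.sqrt pM := by
            rw [show (4:ℝ) = 2 ^ 2 by norm_num,
              Real.sqrt_sq (by norm_num : (0:ℝ) ≤ 2)]
        _ = Real.sqrt (4 * pM) := (Real.sqrt_mul (by norm_num) _).symm
        _ ≤ _ := h1
    have hs2 : 63 / 10 * a ≤ Real.sqrt (10 + 40 * pM) := by
      have h40 : (63 / 10 : ℝ) ≤ Real.sqrt 40 := by
        have h2 : Real.sqrt ((63 / 10) ^ 2) ≤ Real.sqrt 40 :=
          Real.sqrt_le_sqrt (by norm_num)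
        rwa [Real.sqrt_sq (by norm_num : (0:ℝ) ≤ 63 / 10)] at h2
      have h1 : Real.sqrt (40 * pM) ≤ Real.sqrt (10 + 40 * pM) :=
        Real.sqrt_le_sqrt (by linarith)
      have h2 : Real.sqrt (40 * pM) = Real.sqrt 40 * a :=
        Real.sqrt_mul (by norm_num) _
      nlinarith
    have hs1pos : (0:ℝ) < Real.sqrt (2 + 4 * pM) := by positivity
    have hs2pos : (0:ℝ) < Real.sqrt (10 + 40 * pM) := by positivity
    have ht1 : (pM - 2) / Real.sqrt (2 + 4 * pM) ≤ a / 2 := by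
      rw [div_le_iff₀ hs1pos]
      nlinarith
    have ht2 : (pM - 1) / Real.sqrt (10 + 40 * pM) ≤ a * (10 / 63) := by
      rw [div_le_iff₀ hs2pos]
      nlinarith [mul_le_mul_of_nonneg_left hs2
        (by positivity : (0:ℝ) ≤ a * (10 / 63))]
    have hsum : (pM - 2) / Real.sqrt (2 + 4 * pM)
        + (pM - 1) / Real.sqrt (10 + 40 * pM) ≤ 361 / 10 := by
      have h : a / 2 + a * (10 / 63) ≤ 361 / 10 := by linarith
      linarith
    have h3 : Real.sqrt 3 ≤ 174 / 100 := by
      have h2 : Real.sqrt 3 ≤ Real.sqrt ((174 / 100) ^ 2) :=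
        Real.sqrt_le_sqrt (by norm_num)
      rwa [Real.sqrt_sq (by norm_num : (0:ℝ) ≤ 174 / 100)] at h2
    nlinarith [Real.sqrt_nonneg 3]
  refine ⟨⟨?_, ?_⟩, ?_, ?_⟩
  · rw [hρMm, lt_div_iff₀ (by linarith : (0:ℝ) < pM + 8)]; nlinarith
  · rw [hρMm, div_lt_iff₀ (by linarith : (0:ℝ) < pM + 8)]; nlinarith
  · rw [hρMp, lt_div_iff₀ (by linarith : (0:ℝ) < pM + 4)]; nlinarith
  · rw [hρMp, div_lt_iff₀ (by linarith : (0:ℝ) < pM + 4)]; nlinarith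
end

section
/- Let p_M be the unique p > 0 with √3·((p − 2)/√(2 + 4p) + (p − 1)/√(10 + 40p)) = 100; set v_M := −√3·(p_M − 2)/√(2 + 4p_M), ρ_{M−} := (2 + 4p_M)/(p_M + 8), ρ_{M+} := (10 + 40p_M)/(p_M + 4), σ₋ := (−ρ_{M−}·v_M)/(1 − ρ_{M−}), and σ₊ := (−1000 − ρ_{M+}·v_M)/(10 − ρ_{M+}). Then −102 < σ₋ < −101 and −68 < σ₊ < −67.9. -/
set_option maxHeartbeats 1600000 in
/-- With `p_M` the unique `p > 0` with
`√3·((p − 2)/√(2 + 4p) + (p − 1)/√(10 + 40p)) = 100`,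
`v_M := −√3·(p_M − 2)/√(2 + 4·p_M)`, `ρ_{M−} := (2 + 4·p_M)/(p_M + 8)`,
`ρ_{M+} := (10 + 40·p_M)/(p_M + 4)`, `σ₋ := (−ρ_{M−}·v_M)/(1 − ρ_{M−})`,
`σ₊ := (−1000 − ρ_{M+}·v_M)/(10 − ρ_{M+})`, one has
`−102 < σ₋ < −101` and `−68 < σ₊ < −67.9`. -/
theorem shock_speed_bounds (pM vM ρMm ρMp σm σp : ℝ) (hpM : 0 < pM)
    (heq : Real.sqrt 3 * ((pM - 2) / Real.sqrt (2 + 4 * pM)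
        + (pM - 1) / Real.sqrt (10 + 40 * pM)) = 100)
    (hvM : vM = -(Real.sqrt 3 * (pM - 2) / Real.sqrt (2 + 4 * pM)))
    (hρMm : ρMm = (2 + 4 * pM) / (pM + 8))
    (hρMp : ρMp = (10 + 40 * pM) / (pM + 4))
    (hσm : σm = (-(ρMm * vM)) / (1 - ρMm))
    (hσp : σp = (-1000 - ρMp * vM) / (10 - ρMp)) :
    (-102 < σm ∧ σm < -101) ∧ (-68 < σp ∧ σp < -67.9) := by
  set s := Real.sqrt (2 + 4 * pM) with hs_def
  set t := Real.sqrt (10 + 40 * pM) with ht_def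
  set r := Real.sqrt 3 with hr_def
  have hs_pos : 0 < s := Real.sqrt_pos.mpr (by linarith)
  have ht_pos : 0 < t := Real.sqrt_pos.mpr (by linarith)
  have hr_pos : 0 < r := Real.sqrt_pos.mpr (by norm_num)
  have hs2 : s ^ 2 = 2 + 4 * pM := Real.sq_sqrt (by linarith)
  have ht2 : t ^ 2 = 10 + 40 * pM := Real.sq_sqrt (by linarith)
  have hr2 : r ^ 2 = 3 := Real.sq_sqrt (by norm_num)
  have hs_ne : s ≠ 0 := hs_pos.ne'
  -- pM > 2
  have hp2 : 2 < pM := by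
    by_contra h
    push_neg at h
    have h1 : (pM - 2) / s ≤ 0 :=
      div_nonpos_of_nonpos_of_nonneg (by linarith) hs_pos.le
    have ht1 : 1 < t := by nlinarith
    have h2 : (pM - 1) / t ≤ 1 := by
      rw [div_le_one ht_pos]; linarith
    have hr4 : r ≤ 2 := by nlinarith
    nlinarith [mul_le_mul_of_nonneg_left h2 hr_pos.le,
      mul_nonpos_of_nonneg_of_nonpos hr_pos.le h1]
  -- cleared form of the defining equation
  have hE : r * ((pM - 2) * t + (pM - 1) * s) = 100 * (s * t) := by
    field_simp at heq
    linarith [heq]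
  -- lower bound on pM
  have hplo : 7699 < pM := by
    by_contra h
    push_neg at h
    have hA : pM - 2 ≤ 43.8593 * s := by
      nlinarith [mul_nonneg (by linarith : (0:ℝ) ≤ pM - 2) (by linarith : (0:ℝ) ≤ 7699 - pM),
        mul_pos hs_pos hs_pos, sq_nonneg (pM - 2 - 43.8593 * s)]
    have hB : pM - 1 ≤ 13.8717 * t := by
      nlinarith [mul_nonneg (by linarith : (0:ℝ) ≤ pM - 2) (by linarith : (0:ℝ) ≤ 7699 - pM),
        mul_pos ht_pos ht_pos, sq_nonneg (pM - 1 - 13.8717 * t)]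
    have hst : 0 < s * t := mul_pos hs_pos ht_pos
    have key : 100 ≤ r * (43.8593 + 13.8717) := by
      have h1 : (pM - 2) * t ≤ 43.8593 * s * t := mul_le_mul_of_nonneg_right hA ht_pos.le
      have h2 : (pM - 1) * s ≤ 13.8717 * t * s := mul_le_mul_of_nonneg_right hB hs_pos.le
      have h3 : 100 * (s * t) ≤ r * ((43.8593 + 13.8717) * (s * t)) := by
        rw [← hE]; nlinarith [hr_pos]
      nlinarith [hst, hr_pos]
    nlinarith [key, hr_pos]
  -- upper bound on pM
  have hphi : pM < 7701 := by
    by_contra h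
    push_neg at h
    have hA : 43.8645 * s ≤ pM - 2 := by
      nlinarith [mul_nonneg (by linarith : (0:ℝ) ≤ pM - 7701) (by linarith : (0:ℝ) ≤ pM - 7701),
        sq_nonneg (pM - 2 - 43.8645 * s)]
    have hB : 13.8731 * t ≤ pM - 1 := by
      nlinarith [mul_nonneg (by linarith : (0:ℝ) ≤ pM - 7701) (by linarith : (0:ℝ) ≤ pM - 7701),
        sq_nonneg (pM - 1 - 13.8731 * t)]
    have hst : 0 < s * t := mul_pos hs_pos ht_pos
    have key : r * (43.8645 + 13.8731) ≤ 100 := by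
      have h1 : 43.8645 * s * t ≤ (pM - 2) * t := mul_le_mul_of_nonneg_right hA ht_pos.le
      have h2 : 13.8731 * t * s ≤ (pM - 1) * s := mul_le_mul_of_nonneg_right hB hs_pos.le
      have h3 : r * ((43.8645 + 13.8731) * (s * t)) ≤ 100 * (s * t) := by
        rw [← hE]; nlinarith [hr_pos]
      nlinarith [hst, hr_pos]
    nlinarith [key, hr_pos]
  -- closed form for σm
  have hsm : σm = -(r * s) / 3 := by
    have hp8 : pM + 8 ≠ 0 := by linarith
    have h1ρ : 1 - ρMm ≠ 0 := by
      rw [hρMm]; intro hcon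
      rw [sub_eq_zero] at hcon
      field_simp at hcon
      linarith
    rw [hρMm] at h1ρ
    rw [hσm, hρMm, hvM]
    rw [div_eq_div_iff h1ρ (by norm_num : (3:ℝ) ≠ 0)]
    field_simp
    linear_combination (-3 * (pM - 2)) * hs2
  -- cleared form for σp
  have hEp : σp * (30 * (pM - 1) * s)
      = 1000 * (pM + 4) * s - r * (pM - 2) * (10 + 40 * pM) := by
    have hp4 : pM + 4 ≠ 0 := by linarith
    have h10ρ : 10 - ρMp ≠ 0 := by
      rw [hρMp]; intro hcon
      rw [sub_eq_zero] at hcon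
      field_simp at hcon
      linarith
    rw [hρMp] at h10ρ
    rw [hσp, hρMp, hvM]
    rw [div_mul_eq_mul_div, div_eq_iff h10ρ]
    field_simp
    ring
  -- numeric bounds
  have hrs_pos : 0 < r * s := mul_pos hr_pos hs_pos
  have hslb : 175.49 < s := by nlinarith
  have hsub : s < 175.52 := by nlinarith
  have hrlb : 1.7320508 < r := by nlinarith
  have hrub : r < 1.7320509 := by nlinarith
  have hrs1 : r * s < 306 := by nlinarith
  have hrs2 : 303 < r * s := by nlinarith
  have hD : 0 < 30 * (pM - 1) * s := by
    have : (0:ℝ) < pM - 1 := by linarith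
    positivity
  refine ⟨⟨by rw [hsm]; linarith, by rw [hsm]; linarith⟩, ?_, ?_⟩
  · by_contra h
    push_neg at h
    have h2 : σp * (30 * (pM - 1) * s) ≤ -68 * (30 * (pM - 1) * s) :=
      mul_le_mul_of_nonneg_right h hD.le
    rw [hEp] at h2
    nlinarith [mul_pos (by linarith : (0:ℝ) < pM - 7699) (by linarith : (0:ℝ) < s - 175.49),
      mul_pos (by linarith : (0:ℝ) < 7701 - pM) (by linarith : (0:ℝ) < s - 175.49),
      mul_pos (by linarith : (0:ℝ) < pM - 7699) (by linarith : (0:ℝ) < 1.7320509 - r),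
      mul_pos (by linarith : (0:ℝ) < 7701 - pM) (by linarith : (0:ℝ) < 1.7320509 - r),
      mul_pos (by linarith : (0:ℝ) < pM - 7699) (by linarith : (0:ℝ) < 7701 - pM)]
  · by_contra h
    push_neg at h
    have h2 : -67.9 * (30 * (pM - 1) * s) ≤ σp * (30 * (pM - 1) * s) :=
      mul_le_mul_of_nonneg_right h hD.le
    rw [hEp] at h2
    nlinarith [mul_pos (by linarith : (0:ℝ) < pM - 7699) (by linarith : (0:ℝ) < 175.52 - s),
      mul_pos (by linarith : (0:ℝ) < 7701 - pM) (by linarith : (0:ℝ) < 175.52 - s),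
      mul_pos (by linarith : (0:ℝ) < pM - 7699) (by linarith : (0:ℝ) < r - 1.7320508),
      mul_pos (by linarith : (0:ℝ) < 7701 - pM) (by linarith : (0:ℝ) < r - 1.7320508),
      mul_pos (by linarith : (0:ℝ) < pM - 7699) (by linarith : (0:ℝ) < 7701 - pM)]
end

section
/- Let p_M be the unique p > 0 with √3·((p − 2)/√(2 + 4p) + (p − 1)/√(10 + 40p)) = 100; set v_M := −√3·(p_M − 2)/√(2 + 4p_M), ρ_{M−} := (2 + 4p_M)/(p_M + 8), ρ_{M+} := (10 + 40p_M)/(p_M + 4), σ₋ := (−ρ_{M−}·v_M)/(1 − ρ_{M−}), and σ₊ := (−1000 − ρ_{M+}·v_M)/(10 − ρ_{M+}). Then σ₋ < v_M < σ₊ < 0. -/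
set_option maxHeartbeats 1000000 in
/-- Fan-ordering of the wave speeds: with `p_M` the unique `p > 0` with
`√3·((p − 2)/√(2 + 4p) + (p − 1)/√(10 + 40p)) = 100`,
`v_M := −√3·(p_M − 2)/√(2 + 4·p_M)`, `ρ_{M−} := (2 + 4·p_M)/(p_M + 8)`,
`ρ_{M+} := (10 + 40·p_M)/(p_M + 4)`, `σ₋ := (−ρ_{M−}·v_M)/(1 − ρ_{M−})`,
`σ₊ := (−1000 − ρ_{M+}·v_M)/(10 − ρ_{M+})`, one has `σ₋ < v_M < σ₊ < 0`. -/
theorem fan_ordering (pM vM ρMm ρMp σm σp : ℝ) (hpM : 0 < pM)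
    (heq : Real.sqrt 3 * ((pM - 2) / Real.sqrt (2 + 4 * pM)
        + (pM - 1) / Real.sqrt (10 + 40 * pM)) = 100)
    (hvM : vM = -(Real.sqrt 3 * (pM - 2) / Real.sqrt (2 + 4 * pM)))
    (hρMm : ρMm = (2 + 4 * pM) / (pM + 8))
    (hρMp : ρMp = (10 + 40 * pM) / (pM + 4))
    (hσm : σm = (-(ρMm * vM)) / (1 - ρMm))
    (hσp : σp = (-1000 - ρMp * vM) / (10 - ρMp)) :
    σm < vM ∧ vM < σp ∧ σp < 0 := by
  set s := Real.sqrt (2 + 4 * pM) with hs_def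
  set t := Real.sqrt (10 + 40 * pM) with ht_def
  set r := Real.sqrt 3 with hr_def
  have hs0 : 0 < s := Real.sqrt_pos.mpr (by linarith)
  have ht0 : 0 < t := Real.sqrt_pos.mpr (by linarith)
  have hr0 : 0 < r := Real.sqrt_pos.mpr (by norm_num)
  have hs2 : s ^ 2 = 2 + 4 * pM := Real.sq_sqrt (by linarith)
  have ht2 : t ^ 2 = 10 + 40 * pM := Real.sq_sqrt (by linarith)
  have hr2 : r ^ 2 = 3 := Real.sq_sqrt (by norm_num)
  have hr_lt : r < 1.8 := by nlinarith
  have hr_gt : 1.7 < r := by nlinarith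
  -- pM > 2
  have hp2 : 2 < pM := by
    by_contra h
    push_neg at h
    have ht3 : 3 < t := by nlinarith
    have h1 : (pM - 2) / s ≤ 0 := by
      rw [div_nonpos_iff]; right; constructor <;> linarith
    have h2 : (pM - 1) / t ≤ 1 / 3 := by
      rw [div_le_div_iff₀ ht0 (by norm_num)]
      nlinarith
    have : r * ((pM - 2) / s + (pM - 1) / t) ≤ r * (1 / 3) := by
      apply mul_le_mul_of_nonneg_left _ hr0.le
      linarith
    nlinarith [heq]
  set a := r * (pM - 2) / s with ha_def
  set b := r * (pM - 1) / t with hb_def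
  have hab : a + b = 100 := by
    rw [ha_def, hb_def, ← heq]; ring
  have ha0 : 0 < a := div_pos (mul_pos hr0 (by linarith)) hs0
  have hb0 : 0 < b := div_pos (mul_pos hr0 (by linarith)) ht0
  -- pM < 8000
  have hp8 : pM < 8000 := by
    by_contra h
    push_neg at h
    have hpoly1 : 5929 * (2 + 4 * pM) ≤ 3 * (pM - 2) ^ 2 := by nlinarith
    have key1 : (77 * s) ^ 2 ≤ (r * (pM - 2)) ^ 2 := by
      rw [mul_pow, mul_pow, hr2, hs2]; nlinarith
    have ha77 : 77 ≤ a := by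
      rw [ha_def, le_div_iff₀ hs0]
      nlinarith [key1, mul_pos hr0 (show (0:ℝ) < pM - 2 by linarith), hs0]
    have hpoly2 : 576 * (10 + 40 * pM) ≤ 3 * (pM - 1) ^ 2 := by nlinarith
    have key2 : (24 * t) ^ 2 ≤ (r * (pM - 1)) ^ 2 := by
      rw [mul_pow, mul_pow, hr2, ht2]; nlinarith
    have hb24 : 24 ≤ b := by
      rw [hb_def, le_div_iff₀ ht0]
      nlinarith [key2, mul_pos hr0 (show (0:ℝ) < pM - 1 by linarith), ht0]
    linarith
  -- b < 25, hence a > 75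
  have hb25 : b < 25 := by
    have key3 : (r * (pM - 1)) ^ 2 < (25 * t) ^ 2 := by
      rw [mul_pow, mul_pow, hr2, ht2]; nlinarith
    rw [hb_def, div_lt_iff₀ ht0]
    nlinarith [key3, mul_pos hr0 (show (0:ℝ) < pM - 1 by linarith), ht0]
  have ha75 : 75 < a := by linarith
  have ha100 : a < 100 := by linarith
  have hvMa : vM = -a := by rw [hvM, ha_def]
  have hvneg : vM < -75 := by rw [hvMa]; linarith
  have hvgt : -100 < vM := by rw [hvMa]; linarith
  -- ρMm > 1
  have hρm1 : 1 < ρMm := by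
    rw [hρMm, lt_div_iff₀ (by linarith : (0:ℝ) < pM + 8)]
    linarith
  have hσmlt : σm < vM := by
    rw [hσm, div_lt_iff_of_neg (by linarith : 1 - ρMm < 0)]
    ring_nf
    nlinarith
  -- ρMp bounds
  have hρp14 : 14 ≤ ρMp := by
    rw [hρMp, le_div_iff₀ (by linarith : (0:ℝ) < pM + 4)]
    linarith
  have hvσp : vM < σp := by
    rw [hσp, lt_div_iff_of_neg (by linarith : 10 - ρMp < 0)]
    ring_nf
    nlinarith
  have hσp0 : σp < 0 := by
    rw [hσp]
    apply div_neg_of_pos_of_neg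
    · nlinarith [mul_le_mul hρp14 (by linarith : (75:ℝ) ≤ -vM) (by norm_num) (by linarith : (0:ℝ) ≤ ρMp)]
    · linarith
  exact ⟨hσmlt, hvσp, hσp0⟩
end

section
/- Define s(ρ, p) := (3/2)·log p − (5/2)·log ρ for ρ, p > 0. Let p_M be the unique p > 0 with √3·((p − 2)/√(2 + 4p) + (p − 1)/√(10 + 40p)) = 100; set v_M := −√3·(p_M − 2)/√(2 + 4p_M), ρ_{M−} := (2 + 4p_M)/(p_M + 8), ρ_{M+} := (10 + 40p_M)/(p_M + 4), σ₋ := (−ρ_{M−}·v_M)/(1 − ρ_{M−}), σ₊ := (−1000 − ρ_{M+}·v_M)/(10 − ρ_{M+}), and D_s := σ₋·(1·s(1,2) − ρ_{M−}·s(ρ_{M−}, p_M)) + v_M·(ρ_{M−}·s(ρ_{M−}, p_M) − ρ_{M+}·s(ρ_{M+}, p_M)) + σ₊·(ρ_{M+}·s(ρ_{M+}, p_M) − 10·s(10,1)). Then −1662 < D_s < −1661. -/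
set_option maxHeartbeats 1000000000


/-- Physical entropy in density–pressure variables with `c_v = 3/2`:
`s(ρ, p) = (3/2)·log p − (5/2)·log ρ`. -/
noncomputable def physEntropy (ρ p : ℝ) : ℝ :=
  (3 / 2) * Real.log p - (5 / 2) * Real.log ρ

private lemma mono1 {q p : ℝ} (h2 : 2 ≤ q) (hqp : q ≤ p) :
    (q - 2) / Real.sqrt (2 + 4 * q) ≤ (p - 2) / Real.sqrt (2 + 4 * p) := by
  have hq0 : (0:ℝ) < 2 + 4 * q := by linarith
  have hp0 : (0:ℝ) < 2 + 4 * p := by linarith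
  have hsq := Real.sqrt_pos.2 hq0
  have hsp := Real.sqrt_pos.2 hp0
  rw [div_le_div_iff₀ hsq hsp]
  have h1 : Real.sqrt ((q-2)^2 * (2+4*p)) = (q-2) * Real.sqrt (2+4*p) := by
    rw [Real.sqrt_mul (sq_nonneg _), Real.sqrt_sq (by linarith : (0:ℝ) ≤ q - 2)]
  have h2' : Real.sqrt ((p-2)^2 * (2+4*q)) = (p-2) * Real.sqrt (2+4*q) := by
    rw [Real.sqrt_mul (sq_nonneg _), Real.sqrt_sq (by linarith : (0:ℝ) ≤ p - 2)]
  rw [← h1, ← h2']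
  apply Real.sqrt_le_sqrt
  nlinarith [mul_nonneg (sub_nonneg.2 hqp) (show (0:ℝ) ≤ p + q - 4 by linarith),
             mul_nonneg (sub_nonneg.2 hqp) (show (0:ℝ) ≤ p * q - 4 by nlinarith)]

private lemma mono2 {q p : ℝ} (h2 : 1 ≤ q) (hqp : q ≤ p) :
    (q - 1) / Real.sqrt (10 + 40 * q) ≤ (p - 1) / Real.sqrt (10 + 40 * p) := by
  have hq0 : (0:ℝ) < 10 + 40 * q := by linarith
  have hp0 : (0:ℝ) < 10 + 40 * p := by linarith
  have hsq := Real.sqrt_pos.2 hq0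
  have hsp := Real.sqrt_pos.2 hp0
  rw [div_le_div_iff₀ hsq hsp]
  have h1 : Real.sqrt ((q-1)^2 * (10+40*p)) = (q-1) * Real.sqrt (10+40*p) := by
    rw [Real.sqrt_mul (sq_nonneg _), Real.sqrt_sq (by linarith : (0:ℝ) ≤ q - 1)]
  have h2' : Real.sqrt ((p-1)^2 * (10+40*q)) = (p-1) * Real.sqrt (10+40*q) := by
    rw [Real.sqrt_mul (sq_nonneg _), Real.sqrt_sq (by linarith : (0:ℝ) ≤ p - 1)]
  rw [← h1, ← h2']
  apply Real.sqrt_le_sqrt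
  nlinarith [mul_nonneg (sub_nonneg.2 hqp) (show (0:ℝ) ≤ p + q - 2 by linarith),
             mul_nonneg (sub_nonneg.2 hqp) (show (0:ℝ) ≤ p * q - 1 by nlinarith)]

private lemma log_upper_slack {c x b : ℝ} (hc : 0 < c) (hcx : 0 < x) (hx : x ≤ b) :
    Real.log x ≤ Real.log c + (b / c - 1) := by
  have h1 : Real.log x - Real.log c = Real.log (x / c) :=
    (Real.log_div (ne_of_gt hcx) (ne_of_gt hc)).symm
  have h2 : Real.log (x / c) ≤ x / c - 1 := Real.log_le_sub_one_of_pos (div_pos hcx hc)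
  have h3 : x / c ≤ b / c := by gcongr
  linarith

private lemma mul_ge_neg_neg {a b a2 b2 : ℝ} (ha : a ≤ a2) (hb : b ≤ b2)
    (ha2 : a2 ≤ 0) (hb2 : b2 ≤ 0) : a2 * b2 ≤ a * b := by
  nlinarith [mul_nonneg (sub_nonneg.2 ha) (sub_nonneg.2 hb)]

private lemma mul_le_neg_neg {a b a1 b1 : ℝ} (ha : a1 ≤ a) (hb : b1 ≤ b)
    (ha' : a ≤ 0) (hb' : b ≤ 0) : a * b ≤ a1 * b1 := by
  nlinarith [mul_nonneg (sub_nonneg.2 ha) (sub_nonneg.2 hb)]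

private lemma mul_ge_neg_pos {a b a1 b2 : ℝ} (ha : a1 ≤ a) (hb : b ≤ b2)
    (ha1 : a1 ≤ 0) (hb2 : 0 ≤ b) : a1 * b2 ≤ a * b := by
  nlinarith [mul_nonneg (sub_nonneg.2 ha) (sub_nonneg.2 hb)]

private lemma mul_le_neg_pos {a b a2 b1 : ℝ} (ha : a ≤ a2) (hb : b1 ≤ b)
    (ha2 : a2 ≤ 0) (hb1 : 0 ≤ b1) : a * b ≤ a2 * b1 := by
  nlinarith [mul_nonneg (sub_nonneg.2 ha) (sub_nonneg.2 hb)]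

private lemma mul_ge_pos_pos {a b a1 b1 : ℝ} (ha : a1 ≤ a) (hb : b1 ≤ b)
    (ha1 : 0 ≤ a1) (hb1 : 0 ≤ b1) : a1 * b1 ≤ a * b := by
  nlinarith [mul_nonneg (sub_nonneg.2 ha) (sub_nonneg.2 hb)]

private lemma mul_le_pos_pos {a b a2 b2 : ℝ} (ha : a ≤ a2) (hb : b ≤ b2)
    (ha' : 0 ≤ a) (hb' : 0 ≤ b) : a * b ≤ a2 * b2 := by
  nlinarith [mul_nonneg (sub_nonneg.2 ha) (sub_nonneg.2 hb)]

/-- The entropy production rate per unit length `D_s` of the 1-D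
self-similar solution satisfies `−1662 < D_s < −1661`. -/
theorem Ds_bounds (pM vM ρMm ρMp σm σp Ds : ℝ) (hpM : 0 < pM)
    (heq : Real.sqrt 3 * ((pM - 2) / Real.sqrt (2 + 4 * pM)
        + (pM - 1) / Real.sqrt (10 + 40 * pM)) = 100)
    (hvM : vM = -(Real.sqrt 3 * (pM - 2) / Real.sqrt (2 + 4 * pM)))
    (hρMm : ρMm = (2 + 4 * pM) / (pM + 8))
    (hρMp : ρMp = (10 + 40 * pM) / (pM + 4))
    (hσm : σm = (-(ρMm * vM)) / (1 - ρMm))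
    (hσp : σp = (-1000 - ρMp * vM) / (10 - ρMp))
    (hDs : Ds = σm * (1 * physEntropy 1 2 - ρMm * physEntropy ρMm pM)
        + vM * (ρMm * physEntropy ρMm pM - ρMp * physEntropy ρMp pM)
        + σp * (ρMp * physEntropy ρMp pM - 10 * physEntropy 10 1)) :
    -1662 < Ds ∧ Ds < -1661 := by
  have hs3a : (1.7320508075:ℝ) < Real.sqrt 3 := by
    have := (Real.lt_sqrt (by norm_num : (0:ℝ) ≤ 1.7320508075)).2
      (by norm_num : (1.7320508075:ℝ)^2 < 3)
    exact this
  have hs3b : Real.sqrt 3 < 1.7320508076 :=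
    (Real.sqrt_lt' (by norm_num)).2 (by norm_num)
  have hupos : (0:ℝ) < Real.sqrt (2 + 4 * pM) := Real.sqrt_pos.2 (by linarith)
  have hwpos : (0:ℝ) < Real.sqrt (10 + 40 * pM) := Real.sqrt_pos.2 (by linarith)
  -- pM > 2
  have h2pM : 2 < pM := by
    by_contra hn
    push_neg at hn
    have ht1 : (pM - 2) / Real.sqrt (2 + 4 * pM) ≤ 0 :=
      div_nonpos_iff.2 (Or.inr ⟨by linarith, hupos.le⟩)
    have hw3 : (3:ℝ) ≤ Real.sqrt (10 + 40 * pM) :=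
      (Real.le_sqrt (by norm_num) (by linarith)).2 (by nlinarith)
    have ht2 : (pM - 1) / Real.sqrt (10 + 40 * pM) ≤ 1/3 := by
      rw [div_le_iff₀ hwpos]; nlinarith
    nlinarith [heq, Real.sqrt_nonneg 3]
  -- lower bracket : 7700.16 < pM
  have hPlo : (7700.16:ℝ) < pM := by
    by_contra hn
    push_neg at hn
    have m1 := mono1 h2pM.le hn
    have m2 := mono2 (by linarith : (1:ℝ) ≤ pM) hn
    have sa : (175.506806:ℝ) < Real.sqrt (2 + 4 * (7700.16:ℝ)) :=
      (Real.lt_sqrt (by norm_num)).2 (by norm_num)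
    have sb : (554.99225:ℝ) < Real.sqrt (10 + 40 * (7700.16:ℝ)) :=
      (Real.lt_sqrt (by norm_num)).2 (by norm_num)
    have spa : (0:ℝ) < Real.sqrt (2 + 4 * (7700.16:ℝ)) := by linarith
    have spb : (0:ℝ) < Real.sqrt (10 + 40 * (7700.16:ℝ)) := by linarith
    have t1b : ((7700.16:ℝ) - 2) / Real.sqrt (2 + 4 * (7700.16:ℝ)) < 7698.16/175.506806 := by
      rw [div_lt_div_iff₀ spa (by norm_num)]
      nlinarith
    have t2b : ((7700.16:ℝ) - 1) / Real.sqrt (10 + 40 * (7700.16:ℝ)) < 7699.16/554.99225 := by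
      rw [div_lt_div_iff₀ spb (by norm_num)]
      nlinarith
    have ha1 : (pM - 2) / Real.sqrt (2 + 4 * pM) < 7698.16/175.506806 := by linarith
    have ha2 : (pM - 1) / Real.sqrt (10 + 40 * pM) < 7699.16/554.99225 := by linarith
    have hge1 : (0:ℝ) ≤ (pM - 2) / Real.sqrt (2 + 4 * pM) :=
      div_nonneg (by linarith) (Real.sqrt_nonneg _)
    have hge2 : (0:ℝ) ≤ (pM - 1) / Real.sqrt (10 + 40 * pM) :=
      div_nonneg (by linarith) (Real.sqrt_nonneg _)
    nlinarith [heq]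
  -- upper bracket : pM < 7700.17
  have hPhi : pM < (7700.17:ℝ) := by
    by_contra hn
    push_neg at hn
    have m1 := mono1 (by norm_num : (2:ℝ) ≤ 7700.17) hn
    have m2 := mono2 (by norm_num : (1:ℝ) ≤ 7700.17) hn
    have sa : Real.sqrt (2 + 4 * (7700.17:ℝ)) < 175.506924 :=
      (Real.sqrt_lt' (by norm_num)).2 (by norm_num)
    have sb : Real.sqrt (10 + 40 * (7700.17:ℝ)) < 554.992614 :=
      (Real.sqrt_lt' (by norm_num)).2 (by norm_num)
    have spa : (0:ℝ) < Real.sqrt (2 + 4 * (7700.17:ℝ)) := Real.sqrt_pos.2 (by norm_num)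
    have spb : (0:ℝ) < Real.sqrt (10 + 40 * (7700.17:ℝ)) := Real.sqrt_pos.2 (by norm_num)
    have t1b : (7698.17:ℝ)/175.506924 < ((7700.17:ℝ) - 2) / Real.sqrt (2 + 4 * (7700.17:ℝ)) := by
      rw [div_lt_div_iff₀ (by norm_num) spa]
      nlinarith
    have t2b : (7699.17:ℝ)/554.992614 < ((7700.17:ℝ) - 1) / Real.sqrt (10 + 40 * (7700.17:ℝ)) := by
      rw [div_lt_div_iff₀ (by norm_num) spb]
      nlinarith
    have ha1 : (7698.17:ℝ)/175.506924 < (pM - 2) / Real.sqrt (2 + 4 * pM) := by linarith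
    have ha2 : (7699.17:ℝ)/554.992614 < (pM - 1) / Real.sqrt (10 + 40 * pM) := by linarith
    nlinarith [heq, hs3a]
  -- vM facts
  have hu2 : Real.sqrt (2 + 4 * pM) ^ 2 = 2 + 4 * pM := Real.sq_sqrt (by linarith)
  have hs32 : Real.sqrt 3 ^ 2 = 3 := Real.sq_sqrt (by norm_num)
  have hvsq : vM ^ 2 * (2 + 4 * pM) = 3 * (pM - 2) ^ 2 := by
    rw [hvM, mul_div_assoc, neg_sq, mul_pow, div_pow, hs32, hu2]
    field_simp
  have hvneg : vM < 0 := by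
    rw [hvM, neg_lt_zero]
    exact div_pos (mul_pos (by linarith : (0:ℝ) < Real.sqrt 3)
      (by linarith : (0:ℝ) < pM - 2)) hupos
  have hvsqhi : vM ^ 2 ≤ 5771.761 := by
    nlinarith [hvsq, mul_nonneg (sub_nonneg.2 hPlo.le) (sub_nonneg.2 hPhi.le), sq_nonneg vM]
  have hvsqlo : (5771.7375:ℝ) ≤ vM ^ 2 := by
    nlinarith [hvsq, mul_nonneg (sub_nonneg.2 hPlo.le) (sub_nonneg.2 hPhi.le), sq_nonneg vM]
  have hv1 : (-75.97211:ℝ) ≤ vM := by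
    nlinarith [hvsqhi, sq_nonneg (vM + 75.97211)]
  have hv2 : vM ≤ (-75.97195:ℝ) := by
    nlinarith [hvsqlo, hvneg]
  -- ρ bounds
  have hrm1 : (3.996102:ℝ) ≤ ρMm := by
    rw [hρMm, le_div_iff₀ (by linarith : (0:ℝ) < pM + 8)]; linarith
  have hrm2 : ρMm ≤ (3.996114:ℝ) := by
    rw [hρMm, div_le_iff₀ (by linarith : (0:ℝ) < pM + 8)]; linarith
  have hrp1 : (39.98047:ℝ) ≤ ρMp := by
    rw [hρMp, le_div_iff₀ (by linarith : (0:ℝ) < pM + 4)]; linarith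
  have hrp2 : ρMp ≤ (39.98059:ℝ) := by
    rw [hρMp, div_le_iff₀ (by linarith : (0:ℝ) < pM + 4)]; linarith
  -- σ equations and bounds
  have hσm' : σm * (1 - ρMm) = -(ρMm * vM) := by
    rw [hσm, div_mul_cancel₀]
    exact ne_of_lt (by linarith : (1:ℝ) - ρMm < 0)
  have hσp' : σp * (10 - ρMp) = -1000 - ρMp * vM := by
    rw [hσp, div_mul_cancel₀]
    exact ne_of_lt (by linarith : (10:ℝ) - ρMp < 0)
  have hsm1 : (-101.3294:ℝ) ≤ σm := by
    nlinarith [hσm', mul_nonneg (sub_nonneg.2 hrm1) (sub_nonneg.2 hv1)]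
  have hsm2 : σm ≤ (-101.3285:ℝ) := by
    nlinarith [hσm', mul_nonneg (sub_nonneg.2 hrm2) (sub_nonneg.2 hv1)]
  have hsp1 : (-67.95787:ℝ) ≤ σp := by
    nlinarith [hσp', mul_nonneg (sub_nonneg.2 hrp1) (sub_nonneg.2 hv1)]
  have hsp2 : σp ≤ (-67.95714:ℝ) := by
    nlinarith [hσp', mul_nonneg (sub_nonneg.2 hrp2) (sub_nonneg.2 hv1)]
  -- log bounds
  have l2a := Real.log_two_gt_d9
  have l2b := Real.log_two_lt_d9
  -- log (7700.16)
  have hlogP1 : (8.9489963:ℝ) < Real.log 7700.16 ∧ Real.log 7700.16 < 8.94899639 := by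
    have h := Real.abs_log_sub_add_sum_range_le
      (show |(0.0600390625:ℝ)| < 1 by
        rw [abs_of_pos (by norm_num : (0:ℝ) < 0.0600390625)]; norm_num) 8
    rw [show (1:ℝ) - 0.0600390625 = 7700.16 / 2 ^ 13 by norm_num] at h
    rw [Real.log_div (by norm_num) (by norm_num), Real.log_pow] at h
    rw [abs_of_pos (by norm_num : (0:ℝ) < 0.0600390625)] at h
    rw [abs_le] at h
    obtain ⟨h1, h2⟩ := h
    simp only [Finset.sum_range_succ, Finset.sum_range_zero] at h1 h2
    push_cast at h1 h2
    constructor <;> linarith [h1, h2, l2a, l2b]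
  -- log (3.996102)
  have hlogRm : (1.3853193:ℝ) < Real.log 3.996102 ∧ Real.log 3.996102 < 1.38531939 := by
    have h := Real.abs_log_sub_add_sum_range_le
      (show |(0.0009745:ℝ)| < 1 by
        rw [abs_of_pos (by norm_num : (0:ℝ) < 0.0009745)]; norm_num) 4
    rw [show (1:ℝ) - 0.0009745 = 3.996102 / 2 ^ 2 by norm_num] at h
    rw [Real.log_div (by norm_num) (by norm_num), Real.log_pow] at h
    rw [abs_of_pos (by norm_num : (0:ℝ) < 0.0009745)] at h
    rw [abs_le] at h
    obtain ⟨h1, h2⟩ := h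
    simp only [Finset.sum_range_succ, Finset.sum_range_zero] at h1 h2
    push_cast at h1 h2
    constructor <;> linarith [h1, h2, l2a, l2b]
  -- log (39.98047)
  have hlogRp : (3.688391:ℝ) < Real.log 39.98047 ∧ Real.log 39.98047 < 3.68839109 := by
    have h := Real.abs_log_sub_add_sum_range_le
      (show |(-0.2493896875:ℝ)| < 1 by
        rw [abs_of_neg (by norm_num : (-0.2493896875:ℝ) < 0)]; norm_num) 16
    rw [show (1:ℝ) - (-0.2493896875) = 39.98047 / 2 ^ 5 by norm_num] at h
    rw [Real.log_div (by norm_num) (by norm_num), Real.log_pow] at h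
    rw [abs_of_neg (by norm_num : (-0.2493896875:ℝ) < 0)] at h
    rw [abs_le] at h
    obtain ⟨h1, h2⟩ := h
    simp only [Finset.sum_range_succ, Finset.sum_range_zero] at h1 h2
    push_cast at h1 h2
    constructor <;> linarith [h1, h2, l2a, l2b]
  -- log 10
  have hlog10 : (2.3025850:ℝ) < Real.log 10 ∧ Real.log 10 < 2.3025851 := by
    have h := Real.abs_log_sub_add_sum_range_le
      (show |(-0.25:ℝ)| < 1 by
        rw [abs_of_neg (by norm_num : (-0.25:ℝ) < 0)]; norm_num) 16
    rw [show (1:ℝ) - (-0.25) = 10 / 2 ^ 3 by norm_num] at h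
    rw [Real.log_div (by norm_num) (by norm_num), Real.log_pow] at h
    rw [abs_of_neg (by norm_num : (-0.25:ℝ) < 0)] at h
    rw [abs_le] at h
    obtain ⟨h1, h2⟩ := h
    simp only [Finset.sum_range_succ, Finset.sum_range_zero] at h1 h2
    push_cast at h1 h2
    constructor <;> linarith [h1, h2, l2a, l2b]
  -- log of the real quantities
  have hLp1 : (8.9489963:ℝ) ≤ Real.log pM := by
    have := Real.log_le_log (by norm_num : (0:ℝ) < 7700.16) hPlo.le
    linarith [hlogP1.1]
  have hLp2 : Real.log pM ≤ (8.9489977:ℝ) := by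
    have := log_upper_slack (show (0:ℝ) < 7700.16 by norm_num) (by linarith) hPhi.le
    linarith [hlogP1.2]
  have hLm1 : (1.3853193:ℝ) ≤ Real.log ρMm := by
    have := Real.log_le_log (by norm_num : (0:ℝ) < 3.996102) hrm1
    linarith [hlogRm.1]
  have hLm2 : Real.log ρMm ≤ (1.3853224:ℝ) := by
    have := log_upper_slack (show (0:ℝ) < 3.996102 by norm_num) (by linarith) hrm2
    linarith [hlogRm.2]
  have hLq1 : (3.688391:ℝ) ≤ Real.log ρMp := by
    have := Real.log_le_log (by norm_num : (0:ℝ) < 39.98047) hrp1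
    linarith [hlogRp.1]
  have hLq2 : Real.log ρMp ≤ (3.6883941:ℝ) := by
    have := log_upper_slack (show (0:ℝ) < 39.98047 by norm_num) (by linarith) hrp2
    linarith [hlogRp.2]
  -- unfold entropies in hDs
  simp only [physEntropy, Real.log_one, mul_zero, sub_zero, zero_sub, one_mul] at hDs
  -- entropy bounds
  have hem1 : (9.96018:ℝ) ≤ 3 / 2 * Real.log pM - 5 / 2 * Real.log ρMm := by linarith
  have hem2 : 3 / 2 * Real.log pM - 5 / 2 * Real.log ρMm ≤ (9.96020:ℝ) := by linarith
  have hep1 : (4.2025:ℝ) ≤ 3 / 2 * Real.log pM - 5 / 2 * Real.log ρMp := by linarith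
  have hep2 : 3 / 2 * Real.log pM - 5 / 2 * Real.log ρMp ≤ (4.20252:ℝ) := by linarith
  have hTm1 : (39.80189:ℝ) ≤ ρMm * (3 / 2 * Real.log pM - 5 / 2 * Real.log ρMm) :=
    le_trans (by norm_num) (mul_ge_pos_pos hrm1 hem1 (by norm_num) (by norm_num))
  have hTm2 : ρMm * (3 / 2 * Real.log pM - 5 / 2 * Real.log ρMm) ≤ (39.80210:ℝ) :=
    le_trans (mul_le_pos_pos hrm2 hem2 (by linarith) (by linarith)) (by norm_num)
  have hTp1 : (168.01792:ℝ) ≤ ρMp * (3 / 2 * Real.log pM - 5 / 2 * Real.log ρMp) :=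
    le_trans (by norm_num) (mul_ge_pos_pos hrp1 hep1 (by norm_num) (by norm_num))
  have hTp2 : ρMp * (3 / 2 * Real.log pM - 5 / 2 * Real.log ρMp) ≤ (168.01923:ℝ) :=
    le_trans (mul_le_pos_pos hrp2 hep2 (by linarith) (by linarith)) (by norm_num)
  -- the three flux terms
  have hA1 : (-38.76238:ℝ) ≤ 3 / 2 * Real.log 2 - ρMm * (3 / 2 * Real.log pM - 5 / 2 * Real.log ρMm) := by
    linarith
  have hA2 : 3 / 2 * Real.log 2 - ρMm * (3 / 2 * Real.log pM - 5 / 2 * Real.log ρMm) ≤ (-38.76216:ℝ) := by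
    linarith
  have hB1 : (-128.21734:ℝ) ≤ ρMm * (3 / 2 * Real.log pM - 5 / 2 * Real.log ρMm)
      - ρMp * (3 / 2 * Real.log pM - 5 / 2 * Real.log ρMp) := by linarith
  have hB2 : ρMm * (3 / 2 * Real.log pM - 5 / 2 * Real.log ρMm)
      - ρMp * (3 / 2 * Real.log pM - 5 / 2 * Real.log ρMp) ≤ (-128.21582:ℝ) := by linarith
  have hC1 : (225.58254:ℝ) ≤ ρMp * (3 / 2 * Real.log pM - 5 / 2 * Real.log ρMp)
      - 10 * -(5 / 2 * Real.log 10) := by linarith [hlog10.1, hlog10.2]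
  have hC2 : ρMp * (3 / 2 * Real.log pM - 5 / 2 * Real.log ρMp)
      - 10 * -(5 / 2 * Real.log 10) ≤ (225.58386:ℝ) := by linarith [hlog10.1, hlog10.2]
  have hPA1 : (3927.71152:ℝ) ≤ σm * (3 / 2 * Real.log 2
      - ρMm * (3 / 2 * Real.log pM - 5 / 2 * Real.log ρMm)) :=
    le_trans (by norm_num) (mul_ge_neg_neg hsm2 hA2 (by norm_num) (by norm_num))
  have hPA2 : σm * (3 / 2 * Real.log 2
      - ρMm * (3 / 2 * Real.log pM - 5 / 2 * Real.log ρMm)) ≤ (3927.76871:ℝ) :=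
    le_trans (mul_le_neg_neg hsm1 hA1 (by linarith) (by linarith)) (by norm_num)
  have hPB1 : (9740.80586:ℝ) ≤ vM * (ρMm * (3 / 2 * Real.log pM - 5 / 2 * Real.log ρMm)
      - ρMp * (3 / 2 * Real.log pM - 5 / 2 * Real.log ρMp)) :=
    le_trans (by norm_num) (mul_ge_neg_neg hv2 hB2 (by norm_num) (by norm_num))
  have hPB2 : vM * (ρMm * (3 / 2 * Real.log pM - 5 / 2 * Real.log ρMm)
      - ρMp * (3 / 2 * Real.log pM - 5 / 2 * Real.log ρMp)) ≤ (9740.94186:ℝ) :=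
    le_trans (mul_le_neg_neg hv1 hB1 (by linarith) (by linarith)) (by norm_num)
  have hPC1 : (-15330.19864:ℝ) ≤ σp * (ρMp * (3 / 2 * Real.log pM - 5 / 2 * Real.log ρMp)
      - 10 * -(5 / 2 * Real.log 10)) :=
    le_trans (by norm_num) (mul_ge_neg_pos hsp1 hC2 (by norm_num) (by linarith))
  have hPC2 : σp * (ρMp * (3 / 2 * Real.log pM - 5 / 2 * Real.log ρMp)
      - 10 * -(5 / 2 * Real.log 10)) ≤ (-15329.94425:ℝ) :=
    le_trans (mul_le_neg_pos hsp2 hC1 (by norm_num) (by norm_num))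
      (by norm_num)
  constructor
  · rw [hDs]; linarith
  · rw [hDs]; linarith
end
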